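/- arXiv:1504.02828 — 3 statements merged into one kernel-verified Lean document; each statement's English description precedes it below -/
import Mathlib

section
/- Let R be a commutative ring and let x_1, …, x_e, c, β ∈ R. Then ∏_{i=1}^{e} (x_i + c + β·x_i·c) = Σ_{p=0}^{e} e_p(x_1,…,x_e) · Σ_{q=0}^{p} C(p,q) · β^q · c^{e−p+q}, where e_p denotes the p-th elementary symmetric polynomial and C(p,q) the binomial coefficient. -/
/-!
Since `x ⊕ c = x * (1 + β * c) + c`, expanding the product over subsets gives
`∑_p e_p(x) (1 + β c)^p c^(e - p)`, and the binomial theorem expands `(1 + β c)^p`.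
-/

open Finset

theorem Finset.prod_add_const_eq_sum_esymm {ι R : Type*} [CommSemiring R] (s : Finset ι)
    (f : ι → R) (c : R) :
    ∏ i ∈ s, (f i + c) =
      ∑ p ∈ range (#s + 1), (∑ t ∈ s.powersetCard p, ∏ i ∈ t, f i) * c ^ (#s - p) := by
  classical
  rw [prod_add, sum_powerset]
  refine sum_congr rfl fun p _ => ?_
  rw [Finset.sum_mul]
  refine sum_congr rfl fun t ht => ?_
  obtain ⟨hts, rfl⟩ := mem_powersetCard.mp ht
  rw [prod_const, card_sdiff_of_subset hts]

theorem Finset.prod_mul_add_const_eq_sum_esymm {ι R : Type*} [CommSemiring R] (s : Finset ι)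
    (x : ι → R) (a c : R) :
    ∏ i ∈ s, (x i * a + c) =
      ∑ p ∈ range (#s + 1), (∑ t ∈ s.powersetCard p, ∏ i ∈ t, x i) * (a ^ p * c ^ (#s - p)) := by
  rw [prod_add_const_eq_sum_esymm]
  refine sum_congr rfl fun p _ => ?_
  rw [← mul_assoc]
  congr 1
  rw [Finset.sum_mul]
  refine sum_congr rfl fun t ht => ?_
  rw [prod_mul_distrib, prod_const, (mem_powersetCard.mp ht).2]

theorem one_add_mul_pow_mul_pow_eq_sum {R : Type*} [CommSemiring R] (β c : R) (n p : ℕ) :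
    (1 + β * c) ^ p * c ^ (n - p) =
      ∑ q ∈ range (p + 1), (p.choose q : R) * β ^ q * c ^ (n - p + q) := by
  rw [add_comm, add_pow, Finset.sum_mul]
  refine sum_congr rfl fun q _ => ?_
  rw [pow_add, mul_pow]
  ring

/-- For a commutative ring `R` and elements `x 1, …, x e, c, β ∈ R`,
`∏ i, (x i + c + β * x i * c) = ∑_{p=0}^{e} e_p(x) * ∑_{q=0}^{p} (p choose q) β^q c^(e-p+q)`,
where `e_p` is the `p`-th elementary symmetric polynomial. -/
theorem stmt0 (R : Type*) [CommRing R] (e : ℕ) (x : Fin e → R) (c β : R) :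
    ∏ i : Fin e, (x i + c + β * x i * c) =
      ∑ p ∈ Finset.range (e + 1),
        (∑ s ∈ Finset.univ.powersetCard p, ∏ i ∈ s, x i) *
          ∑ q ∈ Finset.range (p + 1),
            (p.choose q : R) * β ^ q * c ^ (e - p + q) := by
  have hoplus : ∀ i, x i + c + β * x i * c = x i * (1 + β * c) + c := fun i => by ring
  simp only [hoplus, prod_mul_add_const_eq_sum_esymm, card_univ, Fintype.card_fin,
    one_add_mul_pow_mul_pow_eq_sum]
end

section
/- Let e ≥ 1 and let m be an integer with 0 ≤ m ≤ e−1. In the field of fractions of the polynomial ring ℤ[β, z_1, …, z_e], one has Σ_{i=1}^{e} z_i^{e−1−m} · ∏_{j≠i}(1 + β z_j) / ∏_{j≠i}(z_i − z_j) = (−β)^m. -/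
/-!
Evaluate at `x = (-β)⁻¹` the Lagrange interpolation formula for `X ^ n` at the `n + m + 1`
distinct nodes `v i`, which is exact since `n` is below the number of nodes. As
`x - v j = x * (1 + β * v j)`, every product over `j ≠ i` carries the factor `x ^ (n + m)`, so the
formula reads `x ^ n = x ^ (n + m) * S`, i.e. `S = (-β) ^ m`.
-/

open MvPolynomial

namespace Stmt1

variable (e : ℕ)

/-- The field of fractions of the polynomial ring `ℤ[β, z_1, …, z_e]`. -/
abbrev K (e : ℕ) := FractionRing (MvPolynomial (Option (Fin e)) ℤ)

/-- The variable `β` in the field of fractions. -/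
noncomputable def β : K e :=
  algebraMap (MvPolynomial (Option (Fin e)) ℤ) (K e) (X none)

/-- The variables `z_1, …, z_e` in the field of fractions. -/
noncomputable def z (i : Fin e) : K e :=
  algebraMap (MvPolynomial (Option (Fin e)) ℤ) (K e) (X (some i))

end Stmt1

open Finset Polynomial

namespace Lagrange

variable {F ι : Type*} [Field F] [DecidableEq ι] {s : Finset ι} {v : ι → F}

theorem eval_basis (i : ι) (x : F) :
    (Lagrange.basis s v i).eval x =
      (∏ j ∈ s.erase i, (x - v j)) / ∏ j ∈ s.erase i, (v i - v j) := by
  simp only [Lagrange.basis, basisDivisor, Polynomial.eval_prod, Polynomial.eval_mul,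
    Polynomial.eval_C, Polynomial.eval_sub, Polynomial.eval_X, div_eq_mul_inv,
    ← prod_inv_distrib, ← prod_mul_distrib, mul_comm]

theorem sum_eval_mul_prod_sub_div_prod_sub (hvs : Set.InjOn v s) {f : F[X]}
    (hf : f.degree < #s) (x : F) :
    ∑ i ∈ s, f.eval (v i) * (∏ j ∈ s.erase i, (x - v j)) / ∏ j ∈ s.erase i, (v i - v j) =
      f.eval x := by
  conv_rhs => rw [eq_interpolate hvs hf, interpolate_apply]
  simp only [eval_finsetSum, Polynomial.eval_mul, Polynomial.eval_C, eval_basis, mul_div_assoc]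

theorem sum_pow_mul_prod_one_add_mul_div_prod_sub (hvs : Set.InjOn v s) {β : F} (hβ : β ≠ 0)
    {n m : ℕ} (hcard : n + m + 1 = #s) :
    ∑ i ∈ s, v i ^ n * (∏ j ∈ s.erase i, (1 + β * v j)) / ∏ j ∈ s.erase i, (v i - v j) =
      (-β) ^ m := by
  have hβ' : -β ≠ 0 := neg_ne_zero.mpr hβ
  have hprod : ∀ i ∈ s, ∏ j ∈ s.erase i, (1 + β * v j) =
      (-β) ^ (n + m) * ∏ j ∈ s.erase i, ((-β)⁻¹ - v j) := by
    intro i hi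
    have hfactor : ∀ j, 1 + β * v j = -β * ((-β)⁻¹ - v j) := fun j => by
      rw [mul_sub, mul_inv_cancel₀ hβ']; ring
    rw [prod_congr rfl fun j _ => hfactor j, prod_mul_distrib, prod_const,
      card_erase_of_mem hi, ← hcard, Nat.add_sub_cancel]
  have hdeg : (Polynomial.X ^ n : F[X]).degree < #s := by
    rw [degree_X_pow]; exact_mod_cast (by omega : n < #s)
  have hinterp := sum_eval_mul_prod_sub_div_prod_sub hvs hdeg (-β)⁻¹
  simp only [Polynomial.eval_pow, Polynomial.eval_X] at hinterp
  calc ∑ i ∈ s, v i ^ n * (∏ j ∈ s.erase i, (1 + β * v j)) / ∏ j ∈ s.erase i, (v i - v j)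
      = (-β) ^ (n + m) * ∑ i ∈ s, v i ^ n * (∏ j ∈ s.erase i, ((-β)⁻¹ - v j)) /
          ∏ j ∈ s.erase i, (v i - v j) := by
        rw [mul_sum]
        refine sum_congr rfl fun i hi => ?_
        rw [hprod i hi]; ring
    _ = (-β) ^ m := by
        rw [hinterp, pow_add, inv_pow, mul_right_comm, mul_inv_cancel₀ (pow_ne_zero _ hβ'),
          one_mul]

end Lagrange

namespace Stmt1

variable (e : ℕ)

theorem algebraMap_injective :
    Function.Injective (algebraMap (MvPolynomial (Option (Fin e)) ℤ) (K e)) :=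
  IsFractionRing.injective _ _

theorem β_ne_zero : β e ≠ 0 :=
  (map_ne_zero_iff _ (algebraMap_injective e)).mpr (X_ne_zero _)

theorem z_injective : Function.Injective (z e) :=
  fun _ _ h => Option.some_injective _ (X_injective (algebraMap_injective e h))

/-- For `e ≥ 1` and `0 ≤ m ≤ e - 1`, in the field of fractions of
`ℤ[β, z_1, …, z_e]` one has
`∑_{i=1}^{e} z_i^(e-1-m) ∏_{j≠i}(1 + β z_j) / ∏_{j≠i}(z_i - z_j) = (-β)^m`. -/
theorem stmt1 (e : ℕ) (he : 1 ≤ e) (m : ℕ) (hm : m ≤ e - 1) :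
    ∑ i : Fin e,
        z e i ^ (e - 1 - m) * (∏ j ∈ Finset.univ.erase i, (1 + β e * z e j)) /
          ∏ j ∈ Finset.univ.erase i, (z e i - z e j) =
      (-β e) ^ m :=
  Lagrange.sum_pow_mul_prod_one_add_mul_div_prod_sub (z_injective e).injOn (β_ne_zero e)
    (by rw [card_univ, Fintype.card_fin]; omega)

end Stmt1
end

section
/- Let A be a commutative ring and R := A[[β]] the power series ring in β (so R is β-adically complete). Let c_0 = 1, c_1, …, c_e ∈ R and set c(u) := Σ_{i=0}^{e} c_i u^i. Since c(−u) has constant term 1, it is invertible in R[[u]]; write T(u) = Σ_{j≥0} T_j u^j := c(β) · c(−u)^{−1} ∈ R[[u]], and for m ∈ ℤ define S_m := Σ_{k ≥ max(0,−m)} (−β)^k T_{m+k}, a β-adically convergent sum in R. Then (S_m)_{m∈ℤ} is the unique family of elements of R satisfying: (i) S_m = (−β)^{−m} for all m ≤ 0, and (ii) Σ_{i=0}^{e} (−1)^i c_i S_{m−i} = 0 for all m ≥ 1. Equivalently, the Segre series Σ_{m∈ℤ} S_m u^m equals (1 + βu^{−1})^{−1} · c(β)/c(−u), where (1 + βu^{−1})^{−1}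 is expanded as Σ_{i≥0} (−β)^i u^{−i}. -/
/-!
Write `t m` for the coefficient of `u^m` in `T` (zero for `m < 0`). Then
`S m = Σ_k (-β)^k t (m + k)` satisfies `S m = t m - β S (m + 1)`, so the combination
`W m = Σ_i (-1)^i c_i S (m - i)` satisfies `W m = (c(-u) T)_m - β W (m + 1)`. For `m ≥ 1` the
first term vanishes, so `W m` is divisible by every power of `β`, hence zero. For `m ≤ 0` the
same identity gives `S m = (-β)^(-m) S 0`, and then `W 0 = c(β)` reads `c(β) S 0 = c(β)`,
so `S 0 = 1` since `c(β)` is a unit. Uniqueness holds because the recurrence determines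
`S m` from `S (m - 1), …, S (m - e)`, the coefficient of `S m` being `c_0 = 1`.
-/

open PowerSeries Finset

namespace SegreSeries

section Recurrence

variable {R : Type*} [CommRing R]

def recurrenceSum (e : ℕ) (c : ℕ → R) (s : ℤ → R) (m : ℤ) : R :=
  ∑ i ∈ range (e + 1), (-1) ^ i * c i * s (m - i)

theorem recurrenceSum_eq_add {c : ℕ → R} (hc0 : c 0 = 1) (e : ℕ) (s : ℤ → R) (m : ℤ) :
    recurrenceSum e c s m =
      s m + ∑ i ∈ range e, (-1) ^ (i + 1) * c (i + 1) * s (m - (i + 1 : ℕ)) := by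
  rw [recurrenceSum, sum_range_succ', add_comm]
  simp [hc0]

theorem eq_of_recurrenceSum_eq_zero {c : ℕ → R} (hc0 : c 0 = 1) {e : ℕ} {s s' : ℤ → R}
    (h_nonpos : ∀ m ≤ 0, s m = s' m) (hs : ∀ m, 1 ≤ m → recurrenceSum e c s m = 0)
    (hs' : ∀ m, 1 ≤ m → recurrenceSum e c s' m = 0) : s = s' := by
  suffices h : ∀ N : ℕ, ∀ m : ℤ, m ≤ N → s m = s' m from
    funext fun m => h m.toNat m (Int.self_le_toNat m)
  intro N
  induction N with
  | zero => exact fun m hm => h_nonpos m (mod_cast hm)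
  | succ N ih =>
    intro m hm
    rcases le_or_gt m N with hmN | hmN
    · exact ih m hmN
    have hsum := (hs m (by omega)).trans (hs' m (by omega)).symm
    rw [recurrenceSum_eq_add hc0, recurrenceSum_eq_add hc0,
      sum_congr rfl fun i _ => by rw [ih (m - (i + 1 : ℕ)) (by omega)]] at hsum
    exact add_right_cancel hsum

theorem recurrenceSum_eq_add_mul {e : ℕ} {c : ℕ → R} {s t : ℤ → R} {a : R}
    (h : ∀ m, s m = t m + a * s (m + 1)) (m : ℤ) :
    recurrenceSum e c s m = recurrenceSum e c t m + a * recurrenceSum e c s (m + 1) := by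
  simp only [recurrenceSum, mul_sum, ← sum_add_distrib]
  refine sum_congr rfl fun i _ => ?_
  rw [h, show m - i + 1 = m + 1 - i by ring]
  ring

end Recurrence

noncomputable section PowerSeries

variable {R : Type*} [CommRing R]

def intCoeff (T : R⟦X⟧) (m : ℤ) : R :=
  if 0 ≤ m then coeff m.toNat T else 0

theorem recurrenceSum_intCoeff {e : ℕ} {c : ℕ → R} {T : R⟦X⟧} {r : R}
    (hT : (∑ i ∈ range (e + 1), C (c i) * (-X) ^ i) * T = C r) (m : ℤ) :
    recurrenceSum e c (intCoeff T) m = if m = 0 then r else 0 := by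
  rcases lt_or_ge m 0 with hm | hm
  · rw [if_neg hm.ne]
    exact sum_eq_zero fun i _ => by rw [intCoeff, if_neg (by omega), mul_zero]
  lift m to ℕ using hm
  have h := congrArg (coeff m) hT
  rw [coeff_C, sum_mul, map_sum] at h
  simp only [Nat.cast_eq_zero]
  rw [← h]
  refine sum_congr rfl fun i _ => ?_
  rw [show C (c i) * (-X) ^ i * T = C ((-1) ^ i * c i) * (T * X ^ i) by simp; ring,
    coeff_C_mul, coeff_mul_X_pow', intCoeff]
  by_cases hi : i ≤ m
  · rw [if_pos hi, if_pos (by omega), show ((m : ℤ) - i).toNat = m - i by omega]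
  · rw [if_neg hi, if_neg (by omega)]

/-- `segre t m = Σ_{k ≥ 0} (-X)^k t (m + k)`, an `X`-adically convergent sum. -/
def segre (t : ℤ → R⟦X⟧) (m : ℤ) : R⟦X⟧ :=
  mk fun n => ∑ k ∈ range (n + 1), (-1) ^ k * coeff (n - k) (t (m + k))

theorem segre_eq_add (t : ℤ → R⟦X⟧) (m : ℤ) : segre t m = t m + -X * segre t (m + 1) := by
  ext (_ | n)
  · simp [segre]
  · rw [segre, coeff_mk, sum_range_succ', map_add, neg_mul, map_neg, coeff_succ_X_mul, segre,
      coeff_mk, add_comm, ← sum_neg_distrib]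
    refine congrArg₂ _ (by simp) (sum_congr rfl fun k _ => ?_)
    rw [pow_succ, Nat.add_sub_add_right, Nat.cast_succ, ← add_assoc, add_right_comm]
    ring

theorem segre_neg_natCast {t : ℤ → R⟦X⟧} (ht : ∀ m < 0, t m = 0) (p : ℕ) :
    segre t (-p) = (-X) ^ p * segre t 0 := by
  induction p with
  | zero => simp
  | succ p ih =>
    rw [segre_eq_add, ht _ (by omega), zero_add,
      show -((p + 1 : ℕ) : ℤ) + 1 = -p by push_cast; ring, ih, pow_succ]
    ring

theorem recurrenceSum_segre_zero {e : ℕ} {c : ℕ → R⟦X⟧} {t : ℤ → R⟦X⟧}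
    (ht : ∀ m < 0, t m = 0) :
    recurrenceSum e c (segre t) 0 = (∑ i ∈ range (e + 1), c i * X ^ i) * segre t 0 := by
  rw [recurrenceSum, sum_mul]
  refine sum_congr rfl fun i _ => ?_
  have hsign : (-1 : R⟦X⟧) ^ i * (-1) ^ i = 1 := by rw [← mul_pow]; simp
  rw [zero_sub, segre_neg_natCast ht, neg_pow X]
  linear_combination (c i * X ^ i * segre t 0) * hsign

theorem eq_zero_of_eq_neg_X_mul {f : ℤ → R⟦X⟧} {m₀ : ℤ}
    (h : ∀ m, m₀ ≤ m → f m = -X * f (m + 1)) (m : ℤ) (hm : m₀ ≤ m) : f m = 0 := by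
  have hdvd : ∀ N : ℕ, ∀ m, m₀ ≤ m → X ^ N ∣ f m := by
    intro N
    induction N with
    | zero => simp
    | succ N ih =>
      intro m hm
      rw [h m hm, pow_succ', neg_mul]
      exact (mul_dvd_mul_left X (ih (m + 1) (by omega))).neg_right
  ext n
  exact X_pow_dvd_iff.mp (hdvd (n + 1) m hm) n (Nat.lt_succ_self n)

end PowerSeries

end SegreSeries

open SegreSeries in
/-- Let `A` be a commutative ring and `R := A⟦β⟧` (here `β` is the power
series variable `X`).  Let `c 0 = 1, c 1, …, c e ∈ R` and let `T = Σ_j T_j u^j ∈ R⟦u⟧` be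
determined by `c(-u) * T(u) = c(β)` (i.e. `T = c(β)/c(-u)`, where `c(u) = Σ_i c_i u^i`).
For `m ∈ ℤ` let `S m := Σ_{k ≥ max(0,-m)} (-β)^k T_{m+k}` (a β-adically convergent sum,
written out coefficientwise).  Then `(S m)_{m ∈ ℤ}` is the unique family with
(i) `S m = (-β)^{-m}` for `m ≤ 0` and (ii) `Σ_{i=0}^{e} (-1)^i c_i S_{m-i} = 0` for `m ≥ 1`. -/
theorem stmt2 (A : Type*) [CommRing A] (e : ℕ) (c : ℕ → PowerSeries A) (hc0 : c 0 = 1)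
    (T : PowerSeries (PowerSeries A))
    (hT : (∑ i ∈ Finset.range (e + 1),
              PowerSeries.C (c i) * (-PowerSeries.X) ^ i) * T =
          PowerSeries.C
            (∑ i ∈ Finset.range (e + 1), c i * PowerSeries.X ^ i))
    (S : ℤ → PowerSeries A)
    (hS : ∀ m : ℤ, S m = PowerSeries.mk fun n =>
        ∑ k ∈ Finset.range (n + 1),
          (-1 : A) ^ k *
            (if 0 ≤ m + (k : ℤ) then
                PowerSeries.coeff (n - k)
                  (PowerSeries.coeff (m + (k : ℤ)).toNat T)
              else 0)) :
    ((∀ m : ℤ, m ≤ 0 → S m = (-PowerSeries.X) ^ (-m).toNat) ∧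
      (∀ m : ℤ, 1 ≤ m →
        ∑ i ∈ Finset.range (e + 1), (-1 : PowerSeries A) ^ i * c i * S (m - i) = 0)) ∧
    ∀ S' : ℤ → PowerSeries A,
      ((∀ m : ℤ, m ≤ 0 → S' m = (-PowerSeries.X) ^ (-m).toNat) ∧
        (∀ m : ℤ, 1 ≤ m →
          ∑ i ∈ Finset.range (e + 1), (-1 : PowerSeries A) ^ i * c i * S' (m - i) = 0)) →
      S' = S := by
  have hS_eq : S = segre (intCoeff T) := by
    funext m
    simp only [hS, segre, intCoeff, apply_ite (coeff _), map_zero]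
  have ht_neg : ∀ m < 0, intCoeff T m = 0 := fun m hm => if_neg (by omega)
  have hstep := recurrenceSum_eq_add_mul (e := e) (c := c) (segre_eq_add (intCoeff T))
  have hW : ∀ m, 1 ≤ m → recurrenceSum e c S m = 0 := by
    rw [hS_eq]
    refine eq_zero_of_eq_neg_X_mul fun m hm => ?_
    rw [hstep, recurrenceSum_intCoeff hT, if_neg (by omega), zero_add]
  have hunit : IsUnit (∑ i ∈ range (e + 1), c i * X ^ i) := by
    simp [isUnit_iff_constantCoeff, sum_range_succ', hc0]
  have hS0 : S 0 = 1 := by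
    refine hunit.mul_left_cancel ?_
    rw [mul_one, hS_eq, ← recurrenceSum_segre_zero ht_neg, hstep, recurrenceSum_intCoeff hT,
      if_pos rfl, zero_add, ← hS_eq, hW 1 le_rfl, mul_zero, add_zero]
  have h_nonpos : ∀ m : ℤ, m ≤ 0 → S m = (-X) ^ (-m).toNat := fun m hm => by
    rw [← mul_one ((-X) ^ _), ← hS0, hS_eq, ← segre_neg_natCast ht_neg,
      Int.toNat_of_nonneg (by omega), neg_neg]
  refine ⟨⟨h_nonpos, hW⟩, fun S' ⟨h_nonpos', hW'⟩ => ?_⟩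
  exact eq_of_recurrenceSum_eq_zero hc0 (fun m hm => (h_nonpos' m hm).trans (h_nonpos m hm).symm)
    hW' hW
end
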